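/- Let K : [0, ∞) → [0, ∞) be nonincreasing with K(x) = O(x e^{-x}) as x → ∞, and let M be the measure with K(x) = ∫_x^∞ (1/s) dM(s). Then all moments of M are finite, and 1 - M(x) = O(x² e^{-x}) as x → ∞. -/

import Mathlib

open Set MeasureTheory Filter
open Real
open scoped ENNReal

/-!
On `(x, y]` the integrand `1 / s` is at least `1 / y`, so the representation of `K` gives
`M (x, y] ≤ y K(x)`, and the tail condition makes each unit slice `(y, y + 1]` carry mass
`O(y² e^{-y})`. Cutting `(x, ∞)` into the slices `(x + n, x + n + 1]`, on which `s ^ k` is at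
most `(x + n + 1) ^ k`, bounds `∫_{s > x} s ^ k dM` by a geometrically convergent series of order
`x ^ (k + 2) e^{-x}`: for `k = 0` this is the tail estimate, and its finiteness for every `k`
gives the moments.
-/

theorem iUnion_Ioc_add_natCast_add_one (x : ℝ) :
    ⋃ n : ℕ, Ioc (x + n) (x + n + 1) = Ioi x := by
  refine Subset.antisymm (iUnion_subset fun n s hs => ?_) fun s (hs : x < s) => ?_
  · exact lt_of_le_of_lt (le_add_of_nonneg_right n.cast_nonneg) hs.1
  · have hpos : 0 < s - x := sub_pos.mpr hs
    have hceil : ((⌈s - x⌉₊ - 1 : ℕ) : ℝ) = ⌈s - x⌉₊ - 1 := by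
      rw [Nat.cast_sub (Nat.one_le_iff_ne_zero.mpr (Nat.ceil_pos.mpr hpos).ne'), Nat.cast_one]
    refine mem_iUnion.mpr ⟨⌈s - x⌉₊ - 1, ?_, ?_⟩ <;> rw [hceil]
    · linarith [Nat.ceil_lt_add_one hpos.le]
    · linarith [Nat.le_ceil (s - x)]

theorem setLIntegral_Ioi_le_tsum_mul_measure_Ioc {μ : Measure ℝ} {f : ℝ → ℝ≥0∞} {x : ℝ}
    (hf : MonotoneOn f (Ioi x)) :
    ∫⁻ s in Ioi x, f s ∂μ ≤ ∑' n : ℕ, f (x + n + 1) * μ (Ioc (x + n) (x + n + 1)) := by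
  rw [← iUnion_Ioc_add_natCast_add_one]
  refine (lintegral_iUnion_le _ _).trans (ENNReal.tsum_le_tsum fun n => ?_)
  have hsub : Ioc (x + n) (x + n + 1) ⊆ Ioi x := by
    rw [← iUnion_Ioc_add_natCast_add_one x]; exact subset_iUnion_of_subset n le_rfl
  calc ∫⁻ s in Ioc (x + n) (x + n + 1), f s ∂μ
      ≤ ∫⁻ _ in Ioc (x + n) (x + n + 1), f (x + n + 1) ∂μ :=
        setLIntegral_mono measurable_const fun s hs =>
          hf (hsub hs) (hsub (right_mem_Ioc.mpr (by linarith))) hs.2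
    _ = f (x + n + 1) * μ (Ioc (x + n) (x + n + 1)) := setLIntegral_const _ _

theorem measure_Ioc_le_ofReal_mul_setIntegral_inv {μ : Measure ℝ} [IsFiniteMeasure μ]
    {x y : ℝ} (hx : 0 < x) (hxy : x ≤ y) :
    μ (Ioc x y) ≤ ENNReal.ofReal (y * ∫ s in Ioi x, 1 / s ∂μ) := by
  have hy : 0 < y := hx.trans_le hxy
  have hint : IntegrableOn (fun s : ℝ => 1 / s) (Ioi x) μ := by
    refine Measure.integrableOn_of_bounded (M := 1 / x) (measure_ne_top μ _)
      (measurable_const.div measurable_id).aestronglyMeasurable ?_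
    filter_upwards [ae_restrict_mem measurableSet_Ioi] with s (hs : x < s)
    rw [norm_of_nonneg (one_div_nonneg.mpr (hx.trans hs).le)]
    exact one_div_le_one_div_of_le hx hs.le
  have hlower : μ.real (Ioc x y) * (1 / y) ≤ ∫ s in Ioc x y, 1 / s ∂μ := by
    rw [← smul_eq_mul, ← setIntegral_const]
    exact setIntegral_mono_on (integrableOn_const (measure_ne_top μ _))
      (hint.mono_set Ioc_subset_Ioi_self) measurableSet_Ioc
      fun s hs => one_div_le_one_div_of_le (hx.trans hs.1) hs.2
  have hupper : ∫ s in Ioc x y, 1 / s ∂μ ≤ ∫ s in Ioi x, 1 / s ∂μ :=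
    setIntegral_mono_set hint
      (ae_restrict_of_forall_mem measurableSet_Ioi fun s (hs : x < s) => by
        have := hx.trans hs; positivity)
      Ioc_subset_Ioi_self.eventuallyLE
  rw [← ofReal_measureReal (measure_ne_top μ _)]
  refine ENNReal.ofReal_le_ofReal ?_
  rw [mul_one_div, div_le_iff₀ hy] at hlower
  linarith [mul_le_mul_of_nonneg_right hupper hy.le]

theorem summable_add_two_pow_mul_exp_neg_one_pow (m : ℕ) :
    Summable fun n : ℕ => ((n : ℝ) + 2) ^ m * exp (-1) ^ n := by
  have hr : ‖exp (-1)‖ < 1 := by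
    rw [norm_of_nonneg (exp_nonneg _), exp_lt_one_iff]; norm_num
  have hshift : Summable fun n : ℕ => ((n + 2 : ℕ) : ℝ) ^ m * exp (-1) ^ (n + 2) :=
    (summable_nat_add_iff 2).mpr (summable_pow_mul_geometric_of_norm_lt_one (R := ℝ) m hr)
  refine (hshift.div_const (exp (-1) ^ 2)).congr fun n => ?_
  have : exp (-1) ^ 2 ≠ 0 := by positivity
  rw [pow_add, Nat.cast_add, Nat.cast_two, ← mul_assoc, mul_div_cancel_right₀ _ this]

theorem add_natCast_add_one_pow_mul_exp_le {x : ℝ} (hx : 1 ≤ x) (m n : ℕ) :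
    (x + n + 1) ^ m * exp (-(x + n)) ≤
      x ^ m * exp (-x) * (((n : ℝ) + 2) ^ m * exp (-1) ^ n) := by
  have hn : (0 : ℝ) ≤ n := n.cast_nonneg
  have hbase : x + n + 1 ≤ x * (n + 2) := by nlinarith
  have hexp : exp (-(x + n)) = exp (-x) * exp (-1) ^ n := by
    rw [← exp_nat_mul, ← exp_add]; ring_nf
  calc (x + n + 1) ^ m * exp (-(x + n)) ≤ (x * (n + 2)) ^ m * exp (-(x + n)) := by
        gcongr
    _ = _ := by rw [hexp, mul_pow]; ring

theorem exists_setLIntegral_Ioi_pow_le {μ : Measure ℝ} {C a : ℝ} (ha : 1 ≤ a) (hC : 0 ≤ C)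
    (hslice : ∀ y, a ≤ y → μ (Ioc y (y + 1)) ≤ ENNReal.ofReal (C * (y + 1) ^ 2 * exp (-y)))
    (k : ℕ) :
    ∃ D ≥ 0, ∀ x, a ≤ x →
      ∫⁻ s in Ioi x, ENNReal.ofReal (s ^ k) ∂μ ≤
        ENNReal.ofReal (D * x ^ (k + 2) * exp (-x)) := by
  set b : ℕ → ℝ := fun n => ((n : ℝ) + 2) ^ (k + 2) * exp (-1) ^ n
  have hb : Summable b := summable_add_two_pow_mul_exp_neg_one_pow (k + 2)
  refine ⟨C * ∑' n, b n, mul_nonneg hC (tsum_nonneg fun n => by positivity), fun x hx => ?_⟩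
  have hx1 : 1 ≤ x := ha.trans hx
  have hmono : MonotoneOn (fun s : ℝ => ENNReal.ofReal (s ^ k)) (Ioi x) :=
    fun s hs _ _ hst =>
      ENNReal.ofReal_le_ofReal (pow_le_pow_left₀ (by linarith [mem_Ioi.mp hs]) hst k)
  have hterm : ∀ n : ℕ, ENNReal.ofReal ((x + n + 1) ^ k) * μ (Ioc (x + n) (x + n + 1)) ≤
      ENNReal.ofReal (C * x ^ (k + 2) * exp (-x) * b n) := fun n => by
    have hn : (0 : ℝ) ≤ n := n.cast_nonneg
    calc ENNReal.ofReal ((x + n + 1) ^ k) * μ (Ioc (x + n) (x + n + 1))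
        ≤ ENNReal.ofReal ((x + n + 1) ^ k) *
            ENNReal.ofReal (C * (x + n + 1) ^ 2 * exp (-(x + n))) :=
          mul_le_mul_right (hslice _ (by linarith)) _
      _ = ENNReal.ofReal (C * ((x + n + 1) ^ (k + 2) * exp (-(x + n)))) := by
          rw [← ENNReal.ofReal_mul (by positivity)]; ring_nf
      _ ≤ ENNReal.ofReal (C * x ^ (k + 2) * exp (-x) * b n) := by
          rw [mul_assoc C, mul_assoc C]
          exact ENNReal.ofReal_le_ofReal
            (mul_le_mul_of_nonneg_left (add_natCast_add_one_pow_mul_exp_le hx1 _ n) hC)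
  calc ∫⁻ s in Ioi x, ENNReal.ofReal (s ^ k) ∂μ
      ≤ ∑' n : ℕ, ENNReal.ofReal ((x + n + 1) ^ k) * μ (Ioc (x + n) (x + n + 1)) :=
        setLIntegral_Ioi_le_tsum_mul_measure_Ioc hmono
    _ ≤ ∑' n : ℕ, ENNReal.ofReal (C * x ^ (k + 2) * exp (-x) * b n) :=
        ENNReal.tsum_le_tsum hterm
    _ = ENNReal.ofReal (C * (∑' n, b n) * x ^ (k + 2) * exp (-x)) := by
        rw [← ENNReal.ofReal_tsum_of_nonneg (fun n => by positivity) (hb.mul_left _),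
          tsum_mul_left]
        ring_nf

theorem integrable_pow_of_setLIntegral_Ioi_ne_top {μ : Measure ℝ} [IsFiniteMeasure μ]
    (hμ : μ (Iio 0) = 0) {a : ℝ} {k : ℕ} (h : ∫⁻ s in Ioi a, ENNReal.ofReal (s ^ k) ∂μ ≠ ∞) :
    Integrable (fun s : ℝ => s ^ k) μ := by
  have hnonneg : ∀ᵐ s ∂μ, 0 ≤ s := by
    filter_upwards [measure_eq_zero_iff_ae_notMem.mp hμ] with s hs using not_lt.mp hs
  have hmeas : AEStronglyMeasurable (fun s : ℝ => s ^ k) μ :=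
    (continuous_pow k).aestronglyMeasurable
  rw [← integrableOn_univ, ← Iic_union_Ioi (a := a), integrableOn_union]
  constructor
  · refine Measure.integrableOn_of_bounded (M := |a| ^ k) (measure_ne_top μ _) hmeas ?_
    filter_upwards [ae_restrict_mem measurableSet_Iic, ae_restrict_of_ae hnonneg]
      with s (hsa : s ≤ a) hs0
    rw [norm_pow, norm_of_nonneg hs0]
    exact pow_le_pow_left₀ hs0 (hsa.trans (le_abs_self a)) k
  · refine ⟨hmeas.restrict, (hasFiniteIntegral_iff_ofReal ?_).mpr h.lt_top⟩
    filter_upwards [ae_restrict_of_ae hnonneg] with s hs using pow_nonneg hs k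

theorem stmt_6_general (K : ℝ → ℝ) (hK0 : ∀ x, 0 ≤ K x)
    (M : Measure ℝ) (hM : IsProbabilityMeasure M) (hMsupp : M (Set.Iio 0) = 0)
    (hrep : ∀ x : ℝ, 0 ≤ x → K x = ∫ s in Set.Ioi x, 1 / s ∂M)
    (C x₀ : ℝ) (htail : ∀ x : ℝ, x₀ ≤ x → K x ≤ C * x * Real.exp (-x)) :
    (∀ k : ℕ, Integrable (fun s => s ^ k) M) ∧
      ∃ C' x₁ : ℝ, ∀ x : ℝ, x₁ ≤ x →
        (M (Set.Ioi x)).toReal ≤ C' * x ^ 2 * Real.exp (-x) := by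
  set a := max x₀ 1
  have ha : 1 ≤ a := le_max_right _ _
  have hC : 0 ≤ C := by
    have h := (hK0 a).trans (htail a (le_max_left _ _))
    rw [mul_assoc] at h
    exact (mul_nonneg_iff_of_pos_right (by positivity)).mp h
  have hslice : ∀ y, a ≤ y →
      M (Ioc y (y + 1)) ≤ ENNReal.ofReal (C * (y + 1) ^ 2 * exp (-y)) := by
    intro y hy
    have hy0 : 0 < y := by linarith
    refine (measure_Ioc_le_ofReal_mul_setIntegral_inv hy0 (by linarith)).trans
      (ENNReal.ofReal_le_ofReal ?_)
    rw [← hrep y hy0.le]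
    calc (y + 1) * K y ≤ (y + 1) * (C * (y + 1) * exp (-y)) := by
          gcongr
          exact (htail y ((le_max_left _ _).trans hy)).trans (by gcongr; linarith)
      _ = C * (y + 1) ^ 2 * exp (-y) := by ring
  constructor
  · intro k
    obtain ⟨D, -, hD⟩ := exists_setLIntegral_Ioi_pow_le ha hC hslice k
    exact integrable_pow_of_setLIntegral_Ioi_ne_top hMsupp
      ((hD a le_rfl).trans_lt ENNReal.ofReal_lt_top).ne
  · obtain ⟨D, hD0, hD⟩ := exists_setLIntegral_Ioi_pow_le ha hC hslice 0
    refine ⟨D, a, fun x hx => ENNReal.toReal_le_of_le_ofReal (by positivity) ?_⟩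
    simpa using hD x hx

theorem stmt_6 (K : ℝ → ℝ) (hK0 : ∀ x, 0 ≤ K x)
    (hmono : AntitoneOn K (Set.Ici 0))
    (M : Measure ℝ) (hM : IsProbabilityMeasure M) (hMsupp : M (Set.Iio 0) = 0)
    (hrep : ∀ x : ℝ, 0 ≤ x → K x = ∫ s in Set.Ioi x, 1 / s ∂M)
    (C x₀ : ℝ) (htail : ∀ x : ℝ, x₀ ≤ x → K x ≤ C * x * Real.exp (-x)) :
    (∀ k : ℕ, Integrable (fun s => s ^ k) M) ∧
      ∃ C' x₁ : ℝ, ∀ x : ℝ, x₁ ≤ x →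
        (M (Set.Ioi x)).toReal ≤ C' * x ^ 2 * Real.exp (-x) :=
  stmt_6_general K hK0 M hM hMsupp hrep C x₀ htail
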